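/- arXiv:2404.12012 — 2 statements merged into one kernel-verified Lean document; each statement's English description precedes it below -/
import Mathlib

section
/- The sequence h_n of unique solutions in (0,1) to ∑_{k=1}^{n} (1/(k(k+1)))^{h_n} = 1 is strictly increasing in n and converges to 1 as n → ∞. -/
/-!
Write `S_n(x) = ∑_{k=1}^n (k(k+1))^{-x}`. Every base lies in `(0, 1)`, so `S_n` is strictly
decreasing in `x`, and `h_n` is the point where it crosses `1`. Since `S_{n+1}(x) - S_n(x) > 0`,
`S_{n+1}(h_n) > 1`, which forces `h_{n+1} > h_n`. At `x = 1` the sum telescopes to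
`1 - 1/(n+1) < 1`, so `h_n < 1`; for fixed `c < 1` the first term alone gains `2^{-c} - 1/2 > 0`
over the telescoping sum, hence `S_n(c) > 1` for large `n`, i.e. `h_n > c` eventually.
-/

open Finset Filter Topology

theorem Finset.strictAnti_sum_rpow {ι : Type*} {s : Finset ι} {b : ι → ℝ} (hs : s.Nonempty)
    (hb : ∀ i ∈ s, b i ∈ Set.Ioo 0 1) : StrictAnti fun x : ℝ => ∑ i ∈ s, b i ^ x :=
  fun _ _ hxy => sum_lt_sum_of_nonempty hs fun i hi =>
    Real.rpow_lt_rpow_of_exponent_gt (hb i hi).1 (hb i hi).2 hxy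

noncomputable def invPronic (k : ℕ) : ℝ := 1 / ((k : ℝ) * ((k : ℝ) + 1))

noncomputable def invPronicPowSum (n : ℕ) (x : ℝ) : ℝ := ∑ k ∈ Icc 1 n, invPronic k ^ x

theorem invPronic_mem_Ioo {k : ℕ} (hk : 1 ≤ k) : invPronic k ∈ Set.Ioo 0 1 := by
  have hk' : (1 : ℝ) ≤ k := by exact_mod_cast hk
  refine ⟨by unfold invPronic; positivity, ?_⟩
  rw [invPronic, div_lt_one (by positivity)]
  nlinarith

theorem sum_invPronic (n : ℕ) : ∑ k ∈ Icc 1 n, invPronic k = 1 - 1 / ((n : ℝ) + 1) := by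
  induction n with
  | zero => simp
  | succ m ih =>
    rw [sum_Icc_succ_top (by omega), ih, invPronic]
    push_cast
    field_simp
    ring

namespace invPronicPowSum

theorem strictAnti {n : ℕ} (hn : 1 ≤ n) : StrictAnti (invPronicPowSum n) :=
  strictAnti_sum_rpow (nonempty_Icc.mpr hn) fun _ hk => invPronic_mem_Ioo (mem_Icc.mp hk).1

theorem succ (n : ℕ) (x : ℝ) :
    invPronicPowSum (n + 1) x = invPronicPowSum n x + invPronic (n + 1) ^ x :=
  sum_Icc_succ_top (by omega) _

theorem at_one (n : ℕ) : invPronicPowSum n 1 = 1 - 1 / ((n : ℝ) + 1) := by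
  simp only [invPronicPowSum, Real.rpow_one, sum_invPronic]

theorem lt_one_of_eq_one {n : ℕ} {x : ℝ} (hn : 1 ≤ n) (hx : invPronicPowSum n x = 1) :
    x < 1 := by
  refine (strictAnti hn).lt_iff_gt.mp ?_
  rw [hx, at_one]
  have : (0 : ℝ) < 1 / ((n : ℝ) + 1) := by positivity
  linarith

theorem lt_of_eq_one_of_succ_eq_one {n : ℕ} {x y : ℝ} (hn : 1 ≤ n)
    (hx : invPronicPowSum n x = 1) (hy : invPronicPowSum (n + 1) y = 1) : x < y := by
  by_contra! hyx
  have hle := (strictAnti (Nat.le_succ_of_le hn)).antitone hyx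
  rw [hy, succ, hx] at hle
  have := Real.rpow_pos_of_pos (invPronic_mem_Ioo (Nat.le_add_left 1 n)).1 x
  linarith

theorem at_one_add_le {n : ℕ} {c : ℝ} (hn : 1 ≤ n) (hc : c < 1) :
    invPronicPowSum n 1 + ((1 / 2 : ℝ) ^ c - 1 / 2) ≤ invPronicPowSum n c := by
  have hgain : ∀ k ∈ Icc 1 n, 0 ≤ invPronic k ^ c - invPronic k ^ (1 : ℝ) := fun k hk => by
    have hw := invPronic_mem_Ioo (mem_Icc.mp hk).1
    linarith [Real.rpow_lt_rpow_of_exponent_gt hw.1 hw.2 hc]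
  have hfirst := single_le_sum hgain (mem_Icc.mpr ⟨le_rfl, hn⟩)
  have hw1 : invPronic 1 = 1 / 2 := by norm_num [invPronic]
  rw [hw1, Real.rpow_one, sum_sub_distrib] at hfirst
  rw [invPronicPowSum, invPronicPowSum]
  linarith

theorem eventually_one_lt {c : ℝ} (hc : c < 1) : ∀ᶠ n in atTop, 1 < invPronicPowSum n c := by
  have hgain : (1 / 2 : ℝ) < (1 / 2) ^ c := by
    simpa using
      Real.rpow_lt_rpow_of_exponent_gt (by norm_num : (0 : ℝ) < 1 / 2) (by norm_num) hc
  have hlim : Tendsto (fun n : ℕ => invPronicPowSum n 1 + ((1 / 2 : ℝ) ^ c - 1 / 2)) atTop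
      (𝓝 (1 - 0 + ((1 / 2 : ℝ) ^ c - 1 / 2))) := by
    simp only [at_one]
    exact (tendsto_one_div_add_atTop_nhds_zero_nat.const_sub 1).add_const _
  filter_upwards [hlim.eventually (lt_mem_nhds (show (1 : ℝ) < _ by linarith)),
    eventually_ge_atTop 1] with n hlt hn
  exact hlt.trans_le (at_one_add_le hn hc)

end invPronicPowSum

theorem stmt_4_general (h : ℕ → ℝ)
    (heq : ∀ n : ℕ, 2 ≤ n →
      ∑ k ∈ Finset.Icc 1 n, ((1 / ((k:ℝ) * ((k:ℝ) + 1))) ^ (h n)) = 1) :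
    (∀ n : ℕ, 2 ≤ n → h n < h (n + 1)) ∧
    Filter.Tendsto h Filter.atTop (nhds 1) := by
  have hroot : ∀ n, 2 ≤ n → invPronicPowSum n (h n) = 1 := heq
  refine ⟨fun n hn => invPronicPowSum.lt_of_eq_one_of_succ_eq_one (by omega) (hroot n hn)
    (hroot (n + 1) (by omega)), tendsto_order.mpr ⟨fun c hc => ?_, fun b hb => ?_⟩⟩
  · filter_upwards [invPronicPowSum.eventually_one_lt hc, eventually_ge_atTop 2] with n hlt hn
    rw [← hroot n hn] at hlt
    exact (invPronicPowSum.strictAnti (by omega)).lt_iff_gt.mp hlt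
  · filter_upwards [eventually_ge_atTop 2] with n hn
    exact (invPronicPowSum.lt_one_of_eq_one (by omega) (hroot n hn)).trans hb

theorem stmt_4 (h : ℕ → ℝ)
    (hmem : ∀ n : ℕ, 2 ≤ n → h n ∈ Set.Ioo (0:ℝ) 1)
    (heq : ∀ n : ℕ, 2 ≤ n →
      ∑ k ∈ Finset.Icc 1 n, ((1 / ((k:ℝ) * ((k:ℝ) + 1))) ^ (h n)) = 1) :
    (∀ n : ℕ, 2 ≤ n → h n < h (n + 1)) ∧
    Filter.Tendsto h Filter.atTop (nhds 1) :=
  stmt_4_general h heq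
end

section
/- Let h ∈ (0,1), n ≥ 2, and define weights p_k = (1/(k(k+1)))^h for k = 1,...,n with ∑_{k=1}^n p_k = 1. For the Bernoulli measure m on the attractor J_n determined by these weights (pushed to [0,1] via the coding by the maps g_k), there exists a constant C = C(n) > 0 such that C⁻¹ r^h ≤ m(B(x,r)) ≤ C r^h for all x ∈ J_n and 0 < r ≤ 1. -/
/-
Cut the attractor at scale `r` by a stopping rule: refine the cylinder `[0,1]` along the branches
until its length first drops to at most `r`. The resulting cylinders cover `J`, overlap only at
endpoints, have lengths between `ρₙ r` and `r`, and each has measure (length)^h. The cylinder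
containing `x` lies in `B(x, r)`, which gives the lower bound `ρₙ r^h`; the cylinders meeting
`B(x, r)` lie in `B(x, 2r)`, so there are at most `4 / ρₙ` of them, which gives the upper bound.
-/

open MeasureTheory Set

lemma Finset.card_mul_le_measure_of_pairwise_aedisjoint {α ι : Type*} [MeasurableSpace α]
    {μ : Measure α} {T : Finset ι} {s : ι → Set α} {S : Set α} {δ : ENNReal}
    (hd : (T : Set ι).Pairwise (Function.onFun (AEDisjoint μ) s))
    (hs : ∀ i ∈ T, NullMeasurableSet (s i) μ)
    (hδ : ∀ i ∈ T, δ ≤ μ (s i)) (hS : ∀ i ∈ T, s i ⊆ S) : T.card * δ ≤ μ S :=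
  calc T.card * δ = ∑ _ ∈ T, δ := by rw [Finset.sum_const, nsmul_eq_mul]
    _ ≤ ∑ i ∈ T, μ (s i) := Finset.sum_le_sum hδ
    _ = μ (⋃ i ∈ T, s i) := (measure_biUnion_finset₀ hd hs).symm
    _ ≤ μ S := measure_mono (iUnion₂_subset hS)

namespace LurothIFS

noncomputable section

def ratio (k : ℕ) : ℝ := 1 / ((k : ℝ) * ((k : ℝ) + 1))

def branch (k : ℕ) (x : ℝ) : ℝ := (1 / ((k : ℝ) + 1) - 1 / (k : ℝ)) * x + 1 / (k : ℝ)

def cylinder : List ℕ → Set ℝ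
  | [] => Icc 0 1
  | k :: w => branch k '' cylinder w

def scale (w : List ℕ) : ℝ := (w.map ratio).prod

variable {k l : ℕ} {w v : List ℕ}

lemma ratio_pos (hk : 1 ≤ k) : 0 < ratio k := by
  have : (1 : ℝ) ≤ k := by exact_mod_cast hk
  unfold ratio; positivity

lemma ratio_le_half (hk : 1 ≤ k) : ratio k ≤ 1 / 2 := by
  have : (1 : ℝ) ≤ k := by exact_mod_cast hk
  exact one_div_le_one_div_of_le two_pos (by nlinarith)

lemma ratio_le_ratio (hk : 1 ≤ k) (hkl : k ≤ l) : ratio l ≤ ratio k := by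
  have : (1 : ℝ) ≤ k := by exact_mod_cast hk
  have : (k : ℝ) ≤ l := by exact_mod_cast hkl
  exact one_div_le_one_div_of_le (by positivity) (by gcongr)

lemma one_div_sub_ratio (hk : 1 ≤ k) : 1 / (k : ℝ) - ratio k = 1 / ((k : ℝ) + 1) := by
  have : (1 : ℝ) ≤ k := by exact_mod_cast hk
  unfold ratio; field_simp; ring

lemma branch_eq (hk : 1 ≤ k) : branch k = fun x => 1 / (k : ℝ) - ratio k * x := by
  funext x
  rw [branch, ← one_div_sub_ratio hk]; ring

lemma continuous_branch : Continuous (branch k) := by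
  unfold branch; fun_prop

lemma branch_injective (hk : 1 ≤ k) : Function.Injective (branch k) := by
  intro x y hxy
  rw [branch_eq hk] at hxy
  exact mul_left_cancel₀ (ratio_pos hk).ne' (by linarith)

lemma image_branch_Icc (hk : 1 ≤ k) {a b : ℝ} (hab : a ≤ b) :
    branch k '' Icc a b = Icc (1 / (k : ℝ) - ratio k * b) (1 / (k : ℝ) - ratio k * a) := by
  have : branch k = (fun y => 1 / (k : ℝ) - y) ∘ fun x => ratio k * x := by
    rw [branch_eq hk]; rfl
  rw [this, image_comp, image_mul_left_Icc (ratio_pos hk).le hab, image_const_sub_Icc]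

lemma image_branch_unit (hk : 1 ≤ k) :
    branch k '' Icc 0 1 = Icc (1 / ((k : ℝ) + 1)) (1 / (k : ℝ)) := by
  rw [image_branch_Icc hk zero_le_one, mul_one, mul_zero, sub_zero, one_div_sub_ratio hk]

@[simp] lemma scale_nil : scale [] = 1 := rfl

@[simp] lemma scale_cons : scale (k :: w) = ratio k * scale w := List.prod_cons

lemma scale_pos (hw : ∀ k ∈ w, 1 ≤ k) : 0 < scale w :=
  List.prod_pos fun _ ha => by
    obtain ⟨k, hk, rfl⟩ := List.mem_map.1 ha
    exact ratio_pos (hw k hk)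

lemma isCompact_cylinder (w : List ℕ) : IsCompact (cylinder w) := by
  induction w with
  | nil => exact isCompact_Icc
  | cons k w ih => exact ih.image continuous_branch

lemma measurableSet_cylinder (w : List ℕ) : MeasurableSet (cylinder w) :=
  (isCompact_cylinder w).measurableSet

lemma cylinder_eq_Icc (hw : ∀ k ∈ w, 1 ≤ k) : ∃ a, cylinder w = Icc a (a + scale w) := by
  induction w with
  | nil => exact ⟨0, by simp [cylinder]⟩
  | cons k w ih =>
    rw [List.forall_mem_cons] at hw
    obtain ⟨a, ha⟩ := ih hw.2
    refine ⟨1 / (k : ℝ) - ratio k * (a + scale w), ?_⟩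
    rw [cylinder, ha, image_branch_Icc hw.1 (by linarith [scale_pos hw.2]), scale_cons]
    ring_nf

lemma cylinder_subset_unit (hw : ∀ k ∈ w, 1 ≤ k) : cylinder w ⊆ Icc 0 1 := by
  induction w with
  | nil => exact subset_rfl
  | cons k w ih =>
    rw [List.forall_mem_cons] at hw
    have hk : (1 : ℝ) ≤ k := by exact_mod_cast hw.1
    calc cylinder (k :: w) ⊆ branch k '' Icc 0 1 := image_mono (ih hw.2)
      _ = Icc (1 / ((k : ℝ) + 1)) (1 / (k : ℝ)) := image_branch_unit hw.1
      _ ⊆ Icc 0 1 := Icc_subset_Icc (by positivity) (div_le_one_of_le₀ hk (by positivity))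

lemma volume_cylinder (hw : ∀ k ∈ w, 1 ≤ k) :
    volume (cylinder w) = ENNReal.ofReal (scale w) := by
  obtain ⟨a, ha⟩ := cylinder_eq_Icc hw
  rw [ha, Real.volume_Icc, add_sub_cancel_left]

lemma cylinder_subset_Icc_of_mem (hw : ∀ k ∈ w, 1 ≤ k) {x r : ℝ} (hx : x ∈ cylinder w)
    (hr : scale w ≤ r) : cylinder w ⊆ Icc (x - r) (x + r) := by
  obtain ⟨a, ha⟩ := cylinder_eq_Icc hw
  rw [ha] at hx ⊢
  exact Icc_subset_Icc (by linarith [hx.2]) (by linarith [hx.1])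

lemma cylinder_cons_inter_subsingleton (hk : 1 ≤ k) (hkl : k < l)
    (hw : ∀ k ∈ w, 1 ≤ k) (hv : ∀ k ∈ v, 1 ≤ k) :
    (cylinder (k :: w) ∩ cylinder (l :: v)).Subsingleton := by
  have hl : 1 ≤ l := hk.trans hkl.le
  have hkl' : (k : ℝ) + 1 ≤ l := by exact_mod_cast hkl
  have hsub : ∀ j u, 1 ≤ j → (∀ k ∈ u, 1 ≤ k) →
      cylinder (j :: u) ⊆ Icc (1 / ((j : ℝ) + 1)) (1 / (j : ℝ)) := fun j u hj hu =>
    (image_mono (cylinder_subset_unit hu)).trans (image_branch_unit hj).le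
  refine (subsingleton_Icc_of_ge ?_).anti
    fun x hx => ⟨(hsub k w hk hw hx.1).1, (hsub l v hl hv hx.2).2⟩
  exact one_div_le_one_div_of_le (by positivity) hkl'

/-- Words over `{1, …, n}` obtained by refining `[]` until the scale drops to at most `r`; the
fuel `N` bounds the number of refinements, and `(1 / 2) ^ N ≤ r` makes it sufficient. -/
def stoppingSet (n : ℕ) : ℕ → ℝ → Finset (List ℕ)
  | 0, _ => {[]}
  | N + 1, r => open Classical in if 1 ≤ r then {[]} else
      (Finset.Icc 1 n).biUnion fun k => (stoppingSet n N (r / ratio k)).image (k :: ·)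

variable {n N : ℕ} {r : ℝ}

lemma stoppingSet_of_one_le (hr : 1 ≤ r) : stoppingSet n N r = {[]} := by
  cases N <;> simp [stoppingSet, hr]

lemma mem_stoppingSet_succ :
    w ∈ stoppingSet n (N + 1) r ↔ (1 ≤ r ∧ w = []) ∨
    (r < 1 ∧ ∃ k ∈ Finset.Icc 1 n, ∃ v ∈ stoppingSet n N (r / ratio k), k :: v = w) := by
  rcases le_or_gt 1 r with hr | hr
  · simp [stoppingSet, hr, not_lt.2 hr]
  · simp [stoppingSet, hr, not_le.2 hr]

lemma mem_stoppingSet_zero : w ∈ stoppingSet n 0 r ↔ w = [] := Finset.mem_singleton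

lemma admissible_of_mem_stoppingSet (hw : w ∈ stoppingSet n N r) :
    ∀ k ∈ w, k ∈ Finset.Icc 1 n := by
  induction N generalizing r w with
  | zero => simp [mem_stoppingSet_zero.1 hw]
  | succ N ih =>
    rcases mem_stoppingSet_succ.1 hw with ⟨-, rfl⟩ | ⟨-, k, hk, v, hv, rfl⟩
    · simp
    · exact List.forall_mem_cons.2 ⟨hk, ih hv⟩

lemma ratio_mul_le_scale_of_mem_stoppingSet (hr : 0 < r) (hrn : ratio n * r ≤ 1)
    (hw : w ∈ stoppingSet n N r) : ratio n * r ≤ scale w := by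
  induction N generalizing r w with
  | zero => simpa [mem_stoppingSet_zero.1 hw] using hrn
  | succ N ih =>
    rcases mem_stoppingSet_succ.1 hw with ⟨-, rfl⟩ | ⟨hr1, k, hk, v, hv, rfl⟩
    · simpa using hrn
    · rw [Finset.mem_Icc] at hk
      have hρk := ratio_pos hk.1
      have hρnk := ratio_le_ratio hk.1 hk.2
      have hv' := ih (div_pos hr hρk) (by rw [mul_div_assoc', div_le_one hρk]; nlinarith) hv
      calc ratio n * r = ratio k * (ratio n * (r / ratio k)) := by field_simp
        _ ≤ ratio k * scale v := by gcongr
        _ = scale (k :: v) := scale_cons.symm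

lemma scale_le_of_mem_stoppingSet (hrN : (1 / 2 : ℝ) ^ N ≤ r) (hr1 : r ≤ 1)
    (hw : w ∈ stoppingSet n N r) : scale w ≤ r := by
  induction N generalizing r w with
  | zero => simpa [mem_stoppingSet_zero.1 hw] using hrN
  | succ N ih =>
    rcases mem_stoppingSet_succ.1 hw with ⟨hr, rfl⟩ | ⟨-, k, hk, v, hv, rfl⟩
    · simpa using hr
    · have hk1 := (Finset.mem_Icc.1 hk).1
      have hρk := ratio_pos hk1
      rw [scale_cons, ← le_div_iff₀' hρk]
      rcases le_or_gt (r / ratio k) 1 with hc | hc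
      · refine ih ?_ hc hv
        rw [le_div_iff₀ hρk]
        calc (1 / 2 : ℝ) ^ N * ratio k ≤ (1 / 2) ^ N * (1 / 2) := by
              gcongr; exact ratio_le_half hk1
          _ = (1 / 2) ^ (N + 1) := (pow_succ _ _).symm
          _ ≤ r := hrN
      · rw [stoppingSet_of_one_le hc.le, Finset.mem_singleton] at hv
        simpa [hv] using hc.le

lemma subset_biUnion_cylinder_stoppingSet {J : Set ℝ} (hsub : J ⊆ Icc 0 1)
    (hinv : J ⊆ ⋃ k ∈ Finset.Icc 1 n, branch k '' J) (N : ℕ) (r : ℝ) :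
    J ⊆ ⋃ w ∈ stoppingSet n N r, cylinder w := by
  induction N generalizing r with
  | zero => simpa [stoppingSet, cylinder] using hsub
  | succ N ih =>
    rcases le_or_gt 1 r with hr | hr
    · simpa [stoppingSet_of_one_le hr, cylinder] using hsub
    intro x hx
    obtain ⟨k, hk, y, hy, rfl⟩ : ∃ k ∈ Finset.Icc 1 n, ∃ y ∈ J, branch k y = x := by
      simpa using hinv hx
    obtain ⟨v, hv, hyv⟩ : ∃ v ∈ stoppingSet n N (r / ratio k), y ∈ cylinder v := by
      simpa using ih (r / ratio k) hy
    exact mem_biUnion (mem_stoppingSet_succ.2 (Or.inr ⟨hr, k, hk, v, hv, rfl⟩))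
      (mem_image_of_mem _ hyv)

lemma pairwise_subsingleton_inter_cylinder_stoppingSet :
    (stoppingSet n N r : Set (List ℕ)).Pairwise
      fun w v => (cylinder w ∩ cylinder v).Subsingleton := by
  induction N generalizing r with
  | zero => simp [stoppingSet]
  | succ N ih =>
    rcases le_or_gt 1 r with hr | hr
    · simp [stoppingSet_of_one_le hr]
    intro w hw v hv hwv
    obtain ⟨-, k, hk, w', hw', rfl⟩ :=
      (mem_stoppingSet_succ.1 hw).resolve_left (by simp [hr.not_ge])
    obtain ⟨-, l, hl, v', hv', rfl⟩ :=
      (mem_stoppingSet_succ.1 hv).resolve_left (by simp [hr.not_ge])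
    have adm : ∀ {s u}, u ∈ stoppingSet n N s → ∀ j ∈ u, 1 ≤ j :=
      fun hu j hj => (Finset.mem_Icc.1 (admissible_of_mem_stoppingSet hu j hj)).1
    have hk1 := (Finset.mem_Icc.1 hk).1
    rcases lt_trichotomy k l with hkl | rfl | hkl
    · exact cylinder_cons_inter_subsingleton hk1 hkl (adm hw') (adm hv')
    · rw [cylinder, cylinder, ← image_inter (branch_injective hk1)]
      exact (ih hw' hv' fun h => hwv (h ▸ rfl)).image _
    · rw [inter_comm]
      exact cylinder_cons_inter_subsingleton (Finset.mem_Icc.1 hl).1 hkl (adm hv') (adm hw')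
lemma card_le_of_subset_stoppingSet (hn : 1 ≤ n) (hr : 0 < r) (hrN : (1 / 2 : ℝ) ^ N ≤ r)
    (hr1 : r ≤ 1) {T : Finset (List ℕ)} (hT : T ⊆ stoppingSet n N r) {x : ℝ}
    (hmeet : ∀ w ∈ T, (cylinder w ∩ Icc (x - r) (x + r)).Nonempty) :
    (T.card : ℝ) ≤ 4 / ratio n := by
  have hρ := ratio_pos hn
  have one_le : ∀ w ∈ T, ∀ k ∈ w, 1 ≤ k := fun w hw k hk =>
    (Finset.mem_Icc.1 (admissible_of_mem_stoppingSet (hT hw) k hk)).1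
  have key : (T.card : ENNReal) * ENNReal.ofReal (ratio n * r)
      ≤ volume (Icc (x - 2 * r) (x + 2 * r)) := by
    refine Finset.card_mul_le_measure_of_pairwise_aedisjoint
      (fun w hw v hv hwv => ?_) (fun w _ => (measurableSet_cylinder w).nullMeasurableSet)
      (fun w hw => ?_) (fun w hw => ?_)
    · exact (pairwise_subsingleton_inter_cylinder_stoppingSet (hT hw) (hT hv) hwv).measure_zero _
    · rw [volume_cylinder (one_le w hw)]
      exact ENNReal.ofReal_le_ofReal
        (ratio_mul_le_scale_of_mem_stoppingSet hr (by nlinarith [ratio_le_half hn]) (hT hw))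
    · obtain ⟨y, hyw, hyB⟩ := hmeet w hw
      refine (cylinder_subset_Icc_of_mem (one_le w hw) hyw
        (scale_le_of_mem_stoppingSet hrN hr1 (hT hw))).trans (Icc_subset_Icc ?_ ?_)
      · linarith [hyB.1]
      · linarith [hyB.2]
  rw [Real.volume_Icc, ← ENNReal.ofReal_natCast, ← ENNReal.ofReal_mul (by positivity),
    ENNReal.ofReal_le_ofReal_iff (by linarith)] at key
  rw [le_div_iff₀ hρ]
  nlinarith


section Measure

variable {m : Measure ℝ} {h : ℝ} {J : Set ℝ}

lemma measure_cylinder (h01 : m (Icc 0 1) = 1)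
    (hconf : ∀ A : Set ℝ, MeasurableSet A → A ⊆ Icc 0 1 → ∀ k ∈ Finset.Icc 1 n,
      m (branch k '' A) = ENNReal.ofReal (ratio k ^ h) * m A)
    (hw : ∀ k ∈ w, k ∈ Finset.Icc 1 n) : m (cylinder w) = ENNReal.ofReal (scale w ^ h) := by
  induction w with
  | nil => simp [cylinder, h01]
  | cons k w ih =>
    rw [List.forall_mem_cons] at hw
    have hk := ratio_pos (Finset.mem_Icc.1 hw.1).1
    have hw1 : ∀ j ∈ w, 1 ≤ j := fun j hj => (Finset.mem_Icc.1 (hw.2 j hj)).1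
    rw [cylinder, hconf _ (measurableSet_cylinder w) (cylinder_subset_unit hw1) k hw.1, ih hw.2,
      ← ENNReal.ofReal_mul (Real.rpow_nonneg hk.le _), ← Real.mul_rpow hk.le (scale_pos hw1).le,
      scale_cons]

lemma ratio_mul_rpow_le_measure_Icc (hn : 1 ≤ n) (hh0 : 0 ≤ h) (hh1 : h ≤ 1)
    (hsub : J ⊆ Icc 0 1) (hinv : J ⊆ ⋃ k ∈ Finset.Icc 1 n, branch k '' J)
    (hcyl : ∀ w : List ℕ, (∀ k ∈ w, k ∈ Finset.Icc 1 n) →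
      m (cylinder w) = ENNReal.ofReal (scale w ^ h))
    (hr : 0 < r) (hrN : (1 / 2 : ℝ) ^ N ≤ r) (hr1 : r ≤ 1) {x : ℝ} (hx : x ∈ J) :
    ENNReal.ofReal (ratio n * r ^ h) ≤ m (Icc (x - r) (x + r)) := by
  obtain ⟨w, hw, hxw⟩ : ∃ w ∈ stoppingSet n N r, x ∈ cylinder w := by
    simpa using subset_biUnion_cylinder_stoppingSet hsub hinv N r hx
  have adm := admissible_of_mem_stoppingSet hw
  have hρ := ratio_pos hn
  have hρ1 : ratio n ≤ 1 := (ratio_le_half hn).trans (by norm_num)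
  have hscale := ratio_mul_le_scale_of_mem_stoppingSet hr (by nlinarith) hw
  calc ENNReal.ofReal (ratio n * r ^ h) ≤ ENNReal.ofReal ((ratio n * r) ^ h) := by
        rw [Real.mul_rpow hρ.le hr.le]
        gcongr
        exact Real.self_le_rpow_of_le_one hρ.le hρ1 hh1
    _ ≤ ENNReal.ofReal (scale w ^ h) := by gcongr
    _ = m (cylinder w) := (hcyl w adm).symm
    _ ≤ m (Icc (x - r) (x + r)) := measure_mono <| cylinder_subset_Icc_of_mem
        (fun k hk => (Finset.mem_Icc.1 (adm k hk)).1) hxw (scale_le_of_mem_stoppingSet hrN hr1 hw)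

lemma measure_Icc_le [IsProbabilityMeasure m] (hn : 1 ≤ n) (hh0 : 0 ≤ h)
    (hsub : J ⊆ Icc 0 1) (hinv : J ⊆ ⋃ k ∈ Finset.Icc 1 n, branch k '' J) (hsupp : m J = 1)
    (hcyl : ∀ w : List ℕ, (∀ k ∈ w, k ∈ Finset.Icc 1 n) →
      m (cylinder w) = ENNReal.ofReal (scale w ^ h))
    (hr : 0 < r) (hrN : (1 / 2 : ℝ) ^ N ≤ r) (hr1 : r ≤ 1) (x : ℝ) :
    m (Icc (x - r) (x + r)) ≤ ENNReal.ofReal (4 / ratio n * r ^ h) := by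
  classical
  set S := stoppingSet n N r
  set B := Icc (x - r) (x + r)
  set T := S.filter fun w => (cylinder w ∩ B).Nonempty
  have hU : m (⋃ w ∈ S, cylinder w)ᶜ = 0 :=
    (prob_compl_eq_zero_iff (S.measurableSet_biUnion fun w _ => measurableSet_cylinder w)).2
      (le_antisymm prob_le_one
        (hsupp ▸ measure_mono (subset_biUnion_cylinder_stoppingSet hsub hinv N r)))
  have hBT : B ∩ ⋃ w ∈ S, cylinder w ⊆ ⋃ w ∈ T, cylinder w := by
    rintro y ⟨hyB, hyU⟩
    obtain ⟨w, hw, hyw⟩ := mem_iUnion₂.1 hyU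
    exact mem_iUnion₂.2 ⟨w, Finset.mem_filter.2 ⟨hw, y, hyw, hyB⟩, hyw⟩
  have hT : ∀ w ∈ T, m (cylinder w) ≤ ENNReal.ofReal (r ^ h) := fun w hw => by
    have hwS := Finset.mem_of_mem_filter w hw
    rw [hcyl w (admissible_of_mem_stoppingSet hwS)]
    have := scale_pos fun k hk => (Finset.mem_Icc.1 (admissible_of_mem_stoppingSet hwS k hk)).1
    gcongr
    exact scale_le_of_mem_stoppingSet hrN hr1 hwS
  have hcard : (T.card : ℝ) ≤ 4 / ratio n :=
    card_le_of_subset_stoppingSet hn hr hrN hr1 (Finset.filter_subset _ _)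
      fun w hw => (Finset.mem_filter.1 hw).2
  calc m B = m (B ∩ ⋃ w ∈ S, cylinder w) := (measure_inter_conull hU).symm
    _ ≤ m (⋃ w ∈ T, cylinder w) := measure_mono hBT
    _ ≤ ∑ w ∈ T, m (cylinder w) := measure_biUnion_finset_le T _
    _ ≤ ∑ _ ∈ T, ENNReal.ofReal (r ^ h) := Finset.sum_le_sum hT
    _ = ENNReal.ofReal (T.card * r ^ h) := by
        rw [Finset.sum_const, nsmul_eq_mul, ENNReal.ofReal_mul (by positivity),
          ENNReal.ofReal_natCast]
    _ ≤ ENNReal.ofReal (4 / ratio n * r ^ h) := by gcongr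

end Measure

end

end LurothIFS

open LurothIFS

theorem stmt_18_general (n : ℕ) (hn : 2 ≤ n) (h : ℝ) (hh : h ∈ Set.Ioo (0:ℝ) 1)
    (J : Set ℝ) (hsub : J ⊆ Set.Icc (0:ℝ) 1)
    (hinv : J = ⋃ k ∈ Finset.Icc 1 n,
      (fun x : ℝ => (1 / ((k:ℝ) + 1) - 1 / (k:ℝ)) * x + 1 / (k:ℝ)) '' J)
    (m : Measure ℝ) [IsProbabilityMeasure m]
    (hsupp : m J = 1)
    (hconf : ∀ A : Set ℝ, MeasurableSet A → A ⊆ Set.Icc (0:ℝ) 1 →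
      ∀ k : ℕ, k ∈ Finset.Icc 1 n →
        m ((fun x : ℝ => (1 / ((k:ℝ) + 1) - 1 / (k:ℝ)) * x + 1 / (k:ℝ)) '' A)
          = ENNReal.ofReal ((1 / ((k:ℝ) * ((k:ℝ) + 1))) ^ h) * m A) :
    ∃ C : ℝ, 0 < C ∧ ∀ x ∈ J, ∀ r : ℝ, 0 < r → r ≤ 1 →
      C⁻¹ * r ^ h ≤ (m (Set.Icc (x - r) (x + r))).toReal ∧
      (m (Set.Icc (x - r) (x + r))).toReal ≤ C * r ^ h := by
  have hn1 : 1 ≤ n := by omega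
  have hρ := ratio_pos hn1
  have h01 : m (Icc 0 1) = 1 := le_antisymm prob_le_one (hsupp ▸ measure_mono hsub)
  have hcyl := fun w : List ℕ => measure_cylinder (w := w) h01 hconf
  refine ⟨4 / ratio n, by positivity, fun x hx r hr hr1 => ⟨?_, ?_⟩⟩
  all_goals obtain ⟨N, hN⟩ := exists_pow_lt_of_lt_one hr one_half_lt_one
  · calc (4 / ratio n)⁻¹ * r ^ h ≤ ratio n * r ^ h := by
          rw [inv_div]; gcongr; exact div_le_self hρ.le (by norm_num)
      _ ≤ _ := (ENNReal.ofReal_le_iff_le_toReal (measure_ne_top _ _)).1 <|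
          ratio_mul_rpow_le_measure_Icc hn1 hh.1.le hh.2.le hsub hinv.subset hcyl hr hN.le hr1
            hx
  · exact ENNReal.toReal_le_of_le_ofReal (by positivity) <|
      measure_Icc_le hn1 hh.1.le hsub hinv.subset hsupp hcyl hr hN.le hr1 x

theorem stmt_18 (n : ℕ) (hn : 2 ≤ n) (h : ℝ) (hh : h ∈ Set.Ioo (0:ℝ) 1)
    (hsum : ∑ k ∈ Finset.Icc 1 n, ((1 / ((k:ℝ) * ((k:ℝ) + 1))) ^ h) = 1)
    (J : Set ℝ) (hne : J.Nonempty) (hcomp : IsCompact J) (hsub : J ⊆ Set.Icc (0:ℝ) 1)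
    (hinv : J = ⋃ k ∈ Finset.Icc 1 n,
      (fun x : ℝ => (1 / ((k:ℝ) + 1) - 1 / (k:ℝ)) * x + 1 / (k:ℝ)) '' J)
    (m : Measure ℝ) [IsProbabilityMeasure m]
    (hsupp : m J = 1)
    (hconf : ∀ A : Set ℝ, MeasurableSet A → A ⊆ Set.Icc (0:ℝ) 1 →
      ∀ k : ℕ, k ∈ Finset.Icc 1 n →
        m ((fun x : ℝ => (1 / ((k:ℝ) + 1) - 1 / (k:ℝ)) * x + 1 / (k:ℝ)) '' A)
          = ENNReal.ofReal ((1 / ((k:ℝ) * ((k:ℝ) + 1))) ^ h) * m A) :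
    ∃ C : ℝ, 0 < C ∧ ∀ x ∈ J, ∀ r : ℝ, 0 < r → r ≤ 1 →
      C⁻¹ * r ^ h ≤ (m (Set.Icc (x - r) (x + r))).toReal ∧
      (m (Set.Icc (x - r) (x + r))).toReal ≤ C * r ^ h :=
  stmt_18_general n hn h hh J hsub hinv m hsupp hconf
end
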